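/- Let F be a finite rooted transitive frame with frame formula φ, and let G = ⟨U,S⟩ be any transitive frame with u ∈ U. Then φ is satisfiable in G at u iff the subframe of G generated by u is reducible to F. -/

import Mathlib

/-- A Kripke frame: a set of worlds with a binary relation. -/
structure Frame where
  World : Type
  rel : World → World → Prop

/-- `f` is a reduction (surjective p-morphism) of `F` to `G`. -/
def Reduction (F G : Frame) (f : F.World → G.World) : Prop :=
  Function.Surjective f ∧
  (∀ w u, F.rel w u → G.rel (f w) (f u)) ∧
  (∀ w v, G.rel (f w) v → ∃ u, F.rel w u ∧ f u = v)

/-- `F` is reducible to `G`. -/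
def Reducible (F G : Frame) : Prop := ∃ f, Reduction F G f

/-- The subframe of `F` generated by the point `w`. -/
def Frame.genSub (F : Frame) (w : F.World) : Frame :=
  ⟨{v // Relation.ReflTransGen F.rel w v}, fun a b => F.rel a.1 b.1⟩

/-- Modal formulas over countably many propositional variables. -/
inductive Formula where
  | var : ℕ → Formula
  | bot : Formula
  | imp : Formula → Formula → Formula
  | box : Formula → Formula
deriving DecidableEq

namespace Formula

def neg (a : Formula) : Formula := .imp a .bot
def top : Formula := .imp .bot .bot
def and (a b : Formula) : Formula := neg (.imp a (neg b))
def or (a b : Formula) : Formula := .imp (neg a) b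
def dia (a : Formula) : Formula := neg (.box (neg a))

/-- Finite conjunction of a list of formulas. -/
def bigConj (l : List Formula) : Formula := l.foldr and top

/-- Finite disjunction of a list of formulas. -/
def bigDisj (l : List Formula) : Formula := l.foldr or .bot

end Formula

/-- Kripke satisfaction of a formula at a world of `F` under valuation `V`. -/
def Sat (F : Frame) (V : ℕ → F.World → Prop) : F.World → Formula → Prop
  | w, .var n => V n w
  | _, .bot => False
  | w, .imp a b => Sat F V w a → Sat F V w b
  | w, .box a => ∀ u, F.rel w u → Sat F V u a

/-- `φ` is valid at the point `w` of `F` (true under all valuations). -/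
def SatAll (F : Frame) (w : F.World) (φ : Formula) : Prop := ∀ V, Sat F V w φ

/-- `φ` is valid in the frame `F`. -/
def Valid (F : Frame) (φ : Formula) : Prop := ∀ V w, Sat F V w φ

open Classical in
/-- The frame formula (Jankov–Fine formula) of a finite rooted transitive frame
whose points are enumerated `w_0, …, w_n` (with `w_0` a root), expressed in
terms of the induced relation `R` on indices: the conjunction of `p_0`,
`□(p_0 ∨ ⋯ ∨ p_n)`, the clauses `(p_i → ¬p_j) ∧ □(p_i → ¬p_j)` for `i ≠ j`,
`(p_i → ◇p_j) ∧ □(p_i → ◇p_j)` when `R i j`, and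
`(p_i → ¬◇p_j) ∧ □(p_i → ¬◇p_j)` when not `R i j`. -/
noncomputable def frameFormula (n : ℕ) (R : Fin (n + 1) → Fin (n + 1) → Prop) : Formula :=
  .and (.var 0)
    (.and (.box (Formula.bigDisj ((List.finRange (n + 1)).map fun i => Formula.var i)))
      (Formula.bigConj ((List.finRange (n + 1)).flatMap fun (i : Fin (n + 1)) =>
        (List.finRange (n + 1)).flatMap fun (j : Fin (n + 1)) =>
          (if i = j then []
           else [Formula.and (.imp (.var i) (Formula.neg (.var j)))
                  (.box (.imp (.var i) (Formula.neg (.var j))))]) ++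
          (if R i j then
            [Formula.and (.imp (.var i) (Formula.dia (.var j)))
              (.box (.imp (.var i) (Formula.dia (.var j))))]
           else
            [Formula.and (.imp (.var i) (Formula.neg (Formula.dia (.var j))))
              (.box (.imp (.var i) (Formula.neg (Formula.dia (.var j)))))]))))

/-!
A valuation satisfying the frame formula at `u` labels every point of `G|u` by exactly one point
of `F` (the `p_i` cover and are disjoint), and the `◇`/`¬◇` clauses say precisely that this
labelling is a p-morphism; it is onto because `u` is labelled by the root `w_0`. Conversely, a
reduction `f` of `G|u` onto `F` yields the valuation `p_i := f⁻¹(w_i)` as soon as `f u = w_0`.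
This can always be arranged: `f u` and `w_0` both generate `F`, so they lie in one cluster, and
swapping them is an automorphism of the transitive frame `F`.
-/

open Relation

section Satisfaction

variable {G : Frame} {V : ℕ → G.World → Prop} {w : G.World} {φ ψ : Formula}

theorem sat_and : Sat G V w (φ.and ψ) ↔ Sat G V w φ ∧ Sat G V w ψ := by
  simp only [Formula.and, Formula.neg, Sat]
  tauto

theorem sat_dia : Sat G V w φ.dia ↔ ∃ v, G.rel w v ∧ Sat G V v φ := by
  simp [Formula.dia, Formula.neg, Sat]

theorem sat_bigConj {l : List Formula} : Sat G V w (Formula.bigConj l) ↔ ∀ φ ∈ l, Sat G V w φ := by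
  induction l with
  | nil => simp [Formula.bigConj, Formula.top, Sat]
  | cons φ l ih => simp [Formula.bigConj, sat_and, ← ih]

theorem sat_bigDisj {l : List Formula} : Sat G V w (Formula.bigDisj l) ↔ ∃ φ ∈ l, Sat G V w φ := by
  induction l with
  | nil => simp [Formula.bigDisj, Sat]
  | cons φ l ih =>
    simp only [Formula.bigDisj, List.foldr, Formula.or, Formula.neg, Sat] at ih ⊢
    simp only [imp_false, ih, List.mem_cons, exists_eq_or_imp]
    tauto

theorem sat_var {k : ℕ} : Sat G V w (.var k) ↔ V k w := Iff.rfl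

theorem sat_neg : Sat G V w φ.neg ↔ ¬ Sat G V w φ := Iff.rfl

theorem sat_imp : Sat G V w (φ.imp ψ) ↔ (Sat G V w φ → Sat G V w ψ) := Iff.rfl

theorem sat_box : Sat G V w (.box φ) ↔ ∀ v, G.rel w v → Sat G V v φ := Iff.rfl

theorem sat_and_box : Sat G V w (φ.and (.box φ)) ↔ ∀ v, ReflGen G.rel w v → Sat G V v φ := by
  simp [sat_and, Sat, reflGen_iff, or_imp, forall_and]

end Satisfaction

theorem sat_frameFormula_iff {n : ℕ} {R : Fin (n + 1) → Fin (n + 1) → Prop} {G : Frame}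
    {V : ℕ → G.World → Prop} {u : G.World} :
    Sat G V u (frameFormula n R) ↔
      V 0 u ∧ (∀ w, G.rel u w → ∃ i : Fin (n + 1), V i w) ∧
      ∀ i j : Fin (n + 1), ∀ w, ReflGen G.rel u w → V i w →
        (i ≠ j → ¬ V j w) ∧ (R i j ↔ ∃ v, G.rel w v ∧ V j v) := by
  simp only [frameFormula, sat_and, sat_var, sat_box]
  refine and_congr_right fun _ => and_congr (by simp [sat_bigDisj, sat_var]) ?_
  simp only [sat_bigConj, List.forall_mem_flatMap, List.forall_mem_append, List.mem_finRange,
    forall_const, apply_ite (fun l : List Formula => ∀ φ ∈ l, Sat G V u φ),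
    List.forall_mem_singleton, sat_and_box, sat_imp, sat_neg, sat_var, sat_dia]
  refine forall₂_congr fun i j => ?_
  by_cases hR : R i j <;> rcases eq_or_ne i j with rfl | hij <;> simp [*, imp_and, forall_and]

namespace Frame

def IsRoot (F : Frame) (r : F.World) : Prop := ∀ x, x = r ∨ F.rel r x

def genRoot (G : Frame) (u : G.World) : (G.genSub u).World := ⟨u, .refl⟩

theorem reflGen_of_genSub {G : Frame} [IsTrans G.World G.rel] {u : G.World}
    (w : (G.genSub u).World) : ReflGen G.rel u w.1 :=
  reflTransGen_eq_reflGen (r := G.rel) ▸ w.2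

theorem isRoot_genRoot (G : Frame) [IsTrans G.World G.rel] (u : G.World) :
    (G.genSub u).IsRoot (G.genRoot u) := by
  intro w
  rcases (reflGen_iff _ _ _).1 (reflGen_of_genSub w) with h | h
  exacts [Or.inl (Subtype.ext h), Or.inr h]

end Frame

theorem Reduction.comp {F G H : Frame} {f : F.World → G.World} {g : G.World → H.World}
    (hf : Reduction F G f) (hg : Reduction G H g) : Reduction F H (g ∘ f) := by
  refine ⟨hg.1.comp hf.1, fun w v h => hg.2.1 _ _ (hf.2.1 w v h), fun w x h => ?_⟩
  obtain ⟨y, hy, rfl⟩ := hg.2.2 (f w) x h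
  obtain ⟨v, hv, rfl⟩ := hf.2.2 w y hy
  exact ⟨v, hv, rfl⟩

theorem RelIso.reduction {F G : Frame} (σ : F.rel ≃r G.rel) : Reduction F G σ :=
  ⟨σ.surjective, fun _ _ => σ.map_rel_iff.2,
    fun w v h => ⟨σ.symm v, σ.map_rel_iff.1 (by simpa using h), by simp⟩⟩

section ClusterSwap

variable {F : Frame} [IsTrans F.World F.rel] [DecidableEq F.World] {a b : F.World}

theorem rel_swap_left (hab : F.rel a b) (hba : F.rel b a) {x y : F.World} (h : F.rel x y) :
    F.rel (Equiv.swap a b x) y := by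
  rw [Equiv.swap_apply_def]
  split_ifs with hxa hxb
  · exact _root_.trans hba (hxa ▸ h)
  · exact _root_.trans hab (hxb ▸ h)
  · exact h

theorem rel_swap_right (hab : F.rel a b) (hba : F.rel b a) {x y : F.World} (h : F.rel x y) :
    F.rel x (Equiv.swap a b y) := by
  rw [Equiv.swap_apply_def]
  split_ifs with hya hyb
  · exact _root_.trans (hya ▸ h) hab
  · exact _root_.trans (hyb ▸ h) hba
  · exact h

def clusterSwap (hab : F.rel a b) (hba : F.rel b a) : F.rel ≃r F.rel where
  toEquiv := Equiv.swap a b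
  map_rel_iff' {x y} := by
    refine ⟨fun h => ?_, fun h => rel_swap_left hab hba (rel_swap_right hab hba h)⟩
    simpa using rel_swap_left hab hba (rel_swap_right hab hba h)

end ClusterSwap

theorem Reduction.exists_apply_eq {G F : Frame} [IsTrans F.World F.rel] {f : G.World → F.World}
    (hf : Reduction G F f) {w : G.World} (hw : G.IsRoot w) {r : F.World} (hr : F.IsRoot r) :
    ∃ g, Reduction G F g ∧ g w = r := by
  classical
  by_cases hfw : f w = r
  · exact ⟨f, hf, hfw⟩
  have hrf : F.rel r (f w) := (hr (f w)).resolve_left hfw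
  obtain ⟨x, rfl⟩ := hf.1 r
  have hfr : F.rel (f w) (f x) := by
    rcases hw x with rfl | hwx
    exacts [absurd rfl hfw, hf.2.1 w x hwx]
  exact ⟨_, hf.comp (clusterSwap hfr hrf).reduction, Equiv.swap_apply_left (f w) (f x)⟩

theorem surjective_of_back {G F : Frame} {f : G.World → F.World}
    (hback : ∀ w v, F.rel (f w) v → ∃ u, G.rel w u ∧ f u = v) {w : G.World} (hw : F.IsRoot (f w)) :
    Function.Surjective f := by
  intro v
  rcases hw v with rfl | h
  · exact ⟨w, rfl⟩
  · obtain ⟨u, -, hu⟩ := hback w v h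
    exact ⟨u, hu⟩

theorem reducible_genSub_of_sat {n : ℕ} {F G : Frame} [IsTrans G.World G.rel]
    {e : Fin (n + 1) → F.World} (he : Function.Surjective e) (hroot : F.IsRoot (e 0))
    {V : ℕ → G.World → Prop} {u : G.World}
    (hV : Sat G V u (frameFormula n fun i j => F.rel (e i) (e j))) :
    Reducible (G.genSub u) F := by
  obtain ⟨hV0, hcover, hclauses⟩ := sat_frameFormula_iff.1 hV
  have hlabel (w : (G.genSub u).World) : ∃ i : Fin (n + 1), V i w.1 := by
    rcases (reflGen_iff _ _ _).1 (Frame.reflGen_of_genSub w) with h | h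
    · exact ⟨0, by simpa [h] using hV0⟩
    · exact hcover w.1 h
  choose idx hidx using hlabel
  have hidx_eq {w} {j : Fin (n + 1)} (hj : V j w.1) : idx w = j :=
    by_contra fun hne => (hclauses _ j w.1 (Frame.reflGen_of_genSub w) (hidx w)).1 hne hj
  have hrel (w) (j : Fin (n + 1)) : F.rel (e (idx w)) (e j) ↔ ∃ v, G.rel w.1 v ∧ V j v :=
    (hclauses _ j w.1 (Frame.reflGen_of_genSub w) (hidx w)).2
  have hback (w) (x : F.World) (hx : F.rel (e (idx w)) x) :
      ∃ v, (G.genSub u).rel w v ∧ e (idx v) = x := by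
    obtain ⟨j, rfl⟩ := he x
    obtain ⟨v, hwv, hv⟩ := (hrel w j).1 hx
    exact ⟨⟨v, w.2.tail hwv⟩, hwv, congrArg e (hidx_eq hv)⟩
  have hidx_root : idx (G.genRoot u) = 0 := hidx_eq hV0
  refine ⟨fun w => e (idx w), surjective_of_back hback (w := G.genRoot u) ?_,
    fun w v hwv => (hrel w _).2 ⟨v.1, hwv, hidx v⟩, hback⟩
  simpa only [hidx_root] using hroot

theorem sat_frameFormula_of_reduction {n : ℕ} {F G : Frame} {e : Fin (n + 1) → F.World}
    (he : Function.Bijective e) {u : G.World} {g : (G.genSub u).World → F.World}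
    (hg : Reduction (G.genSub u) F g) (hg_root : g (G.genRoot u) = e 0) :
    ∃ V, Sat G V u (frameFormula n fun i j => F.rel (e i) (e j)) := by
  set V : ℕ → G.World → Prop := fun k w => ∃ h, ∃ i : Fin (n + 1), i = k ∧ g ⟨w, h⟩ = e i
  have hV (i : Fin (n + 1)) (w : G.World) : V i w ↔ ∃ h, g ⟨w, h⟩ = e i := by
    simp [V, Fin.val_inj]
  refine ⟨V, sat_frameFormula_iff.2 ⟨⟨.refl, 0, rfl, hg_root⟩, fun w huw => ?_,
    fun i j w _ hi => ?_⟩⟩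
  · obtain ⟨i, hi⟩ := he.2 (g ⟨w, .single huw⟩)
    exact ⟨i, (hV i w).2 ⟨_, hi.symm⟩⟩
  obtain ⟨hw, hi⟩ := (hV i w).1 hi
  refine ⟨fun hij hj => hij (he.1 ?_), ⟨fun hij => ?_, fun ⟨v, hwv, hj⟩ => ?_⟩⟩
  · obtain ⟨_, hj⟩ := (hV j w).1 hj
    exact hi.symm.trans hj
  · obtain ⟨v, hwv, hv⟩ := hg.2.2 ⟨w, hw⟩ (e j) (hi ▸ hij)
    exact ⟨v.1, hwv, (hV j v.1).2 ⟨v.2, hv⟩⟩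
  · obtain ⟨hv, hj⟩ := (hV j v).1 hj
    exact hi ▸ hj ▸ hg.2.1 ⟨w, hw⟩ ⟨v, hv⟩ hwv

/-- The frame formula of a finite rooted transitive frame `F` is satisfiable
at a point `u` of a transitive frame `G` iff the subframe of `G` generated by
`u` is reducible to `F`. -/
theorem frameFormula_sat_iff_reducible (n : ℕ) (F : Frame)
    (htrF : ∀ a b c, F.rel a b → F.rel b c → F.rel a c)
    (e : Fin (n + 1) → F.World) (hbij : Function.Bijective e)
    (hroot : ∀ u : F.World, u = e 0 ∨ F.rel (e 0) u)
    (G : Frame) (htrG : ∀ a b c, G.rel a b → G.rel b c → G.rel a c) (u : G.World) :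
    (∃ V, Sat G V u (frameFormula n (fun i j => F.rel (e i) (e j)))) ↔
      Reducible (G.genSub u) F := by
  have : IsTrans F.World F.rel := ⟨htrF⟩
  have : IsTrans G.World G.rel := ⟨htrG⟩
  constructor
  · rintro ⟨V, hV⟩
    exact reducible_genSub_of_sat hbij.2 hroot hV
  · rintro ⟨f, hf⟩
    obtain ⟨g, hg, hg_root⟩ := hf.exists_apply_eq (G.isRoot_genRoot u) hroot
    exact sat_frameFormula_of_reduction hbij hg hg_root
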